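/- arXiv:1906.09098 — 2 statements merged into one kernel-verified Lean document; each statement's English description precedes it below -/
import Mathlib

section
/- Let E_1 be the two-dimensional complex evolution algebra with structural matrix ((1,0),(0,0)) (i.e. e₁e₁ = e₁, e₂e₂ = 0). A linear map P : ℂ² → ℂ² is a Rota–Baxter operator of weight 1 on E_1 if and only if there exists d ∈ ℂ such that P has matrix ((−1,0),(0,d)) or matrix ((0,0),(0,d)), i.e. P(e₂) = d e₂ and P(e₁) = −e₁ or P(e₁) = 0. -/
/-!
Write `P e₁ = (a, b)` and `P e₂ = (c, d)`. Since `x · y = x₁ y₁ e₁` in `E₁`, the Rota–Baxter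
identity of weight `λ` says `P(x)₁ P(y)₁ e₁ = (x₁ P(y)₁ + P(x)₁ y₁ + λ x₁ y₁) P e₁`; on basis
vectors this is `a (a + λ) = 0`, `(2a + λ) b = 0` and `c = 0`, and these suffice since then
`P(x)₁ = a x₁`. For `λ ≠ 0` the first equation forces `a ∈ {0, -λ}`, so `2a + λ = ±λ ≠ 0`
and hence `b = 0`.
-/

/-- The evolution-algebra product on `ℂ²` determined by a structural matrix `A`:
`e_i · e_i = a_{i1} e₁ + a_{i2} e₂` and `e₁ · e₂ = e₂ · e₁ = 0`. -/
noncomputable def evMulC (A : Matrix (Fin 2) (Fin 2) ℂ) (x y : Fin 2 → ℂ) : Fin 2 → ℂ :=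
  fun k => x 0 * y 0 * A 0 k + x 1 * y 1 * A 1 k

/-- `P` is a Rota–Baxter operator of weight `lam` on the evolution algebra with structural
matrix `A`: `P(x)·P(y) = P(x·P(y) + P(x)·y + lam x·y)` for all `x, y`. -/
def IsRotaBaxter (A : Matrix (Fin 2) (Fin 2) ℂ) (lam : ℂ)
    (P : (Fin 2 → ℂ) →ₗ[ℂ] (Fin 2 → ℂ)) : Prop :=
  ∀ x y : Fin 2 → ℂ,
    evMulC A (P x) (P y) = P (evMulC A x (P y) + evMulC A (P x) y + lam • evMulC A x y)

theorem LinearMap.apply_eq_fin_two {R M : Type*} [CommSemiring R] [AddCommMonoid M] [Module R M]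
    (f : (Fin 2 → R) →ₗ[R] M) (x : Fin 2 → R) :
    f x = x 0 • f ![1, 0] + x 1 • f ![0, 1] := by
  rw [← map_smul, ← map_smul, ← map_add]
  congr 1
  ext i
  fin_cases i <;> simp

theorem evMulC_E1 (x y : Fin 2 → ℂ) : evMulC !![1, 0; 0, 0] x y = (x 0 * y 0) • ![1, 0] := by
  ext k
  fin_cases k <;> simp [evMulC]

theorem isRotaBaxter_E1_iff_forall (lam : ℂ) (P : (Fin 2 → ℂ) →ₗ[ℂ] (Fin 2 → ℂ)) :
    IsRotaBaxter !![1, 0; 0, 0] lam P ↔ ∀ x y : Fin 2 → ℂ,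
      (P x 0 * P y 0) • ![1, 0] = (x 0 * P y 0 + P x 0 * y 0 + lam * (x 0 * y 0)) • P ![1, 0] := by
  simp only [IsRotaBaxter, evMulC_E1, smul_smul, ← add_smul, map_smul]

theorem isRotaBaxter_E1_iff (lam : ℂ) (P : (Fin 2 → ℂ) →ₗ[ℂ] (Fin 2 → ℂ)) :
    IsRotaBaxter !![1, 0; 0, 0] lam P ↔
      P ![1, 0] 0 * (P ![1, 0] 0 + lam) = 0 ∧ (2 * P ![1, 0] 0 + lam) * P ![1, 0] 1 = 0 ∧
        P ![0, 1] 0 = 0 := by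
  simp only [isRotaBaxter_E1_iff_forall, funext_iff, Fin.forall_fin_two, Pi.smul_apply,
    smul_eq_mul, Matrix.cons_val_zero, Matrix.cons_val_one, mul_one, mul_zero]
  constructor
  · intro hRB
    obtain ⟨h110, h111⟩ := hRB ![1, 0] ![1, 0]
    obtain ⟨h220, -⟩ := hRB ![0, 1] ![0, 1]
    simp only [Matrix.cons_val_zero, one_mul, zero_mul, mul_one, mul_zero,
      add_zero] at h110 h111 h220
    exact ⟨by linear_combination -h110, by linear_combination -h111, mul_self_eq_zero.mp h220⟩
  · rintro ⟨ha, hb, hc⟩ x y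
    have hP0 : ∀ z, P z 0 = z 0 * P ![1, 0] 0 := fun z => by
      simp [P.apply_eq_fin_two z, hc]
    rw [hP0 x, hP0 y]
    exact ⟨by linear_combination -(x 0 * y 0) * ha, by linear_combination -(x 0 * y 0) * hb⟩

theorem isRotaBaxter_E1_iff_of_ne_zero {lam : ℂ} (hlam : lam ≠ 0)
    (P : (Fin 2 → ℂ) →ₗ[ℂ] (Fin 2 → ℂ)) :
    IsRotaBaxter !![1, 0; 0, 0] lam P ↔
      ∃ d : ℂ, (P ![1, 0] = ![-lam, 0] ∨ P ![1, 0] = ![0, 0]) ∧ P ![0, 1] = ![0, d] := by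
  simp only [isRotaBaxter_E1_iff, funext_iff, Fin.forall_fin_two, Matrix.cons_val_zero,
    Matrix.cons_val_one, exists_and_left, exists_eq', and_true]
  constructor
  · rintro ⟨ha, hb, hc⟩
    refine ⟨?_, hc⟩
    rcases mul_eq_zero.mp ha with ha | ha
    · have : 2 * P ![1, 0] 0 + lam ≠ 0 := by simpa [ha] using hlam
      exact Or.inr ⟨ha, (mul_eq_zero.mp hb).resolve_left this⟩
    · have ha : P ![1, 0] 0 = -lam := eq_neg_of_add_eq_zero_left ha
      have : 2 * P ![1, 0] 0 + lam ≠ 0 := by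
        rw [ha, show 2 * -lam + lam = -lam by ring]
        exact neg_ne_zero.mpr hlam
      exact Or.inl ⟨ha, (mul_eq_zero.mp hb).resolve_left this⟩
  · rintro ⟨(⟨ha, hb⟩ | ⟨ha, hb⟩), hc⟩ <;> exact ⟨by simp [ha], by simp [hb], hc⟩

/-- Rota–Baxter operators of weight 1 on `E₁` (`e₁e₁ = e₁`) are exactly those
with matrix `((-1,0),(0,d))` or `((0,0),(0,d))`. -/
theorem rb_weight1_E1 (P : (Fin 2 → ℂ) →ₗ[ℂ] (Fin 2 → ℂ)) :
    IsRotaBaxter !![1, 0; 0, 0] 1 P ↔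
      ∃ d : ℂ, (P ![1, 0] = ![-1, 0] ∨ P ![1, 0] = ![0, 0]) ∧ P ![0, 1] = ![0, d] :=
  isRotaBaxter_E1_iff_of_ne_zero one_ne_zero P
end

section
/- Let E_2 be the two-dimensional complex evolution algebra with structural matrix ((1,0),(1,0)) (i.e. e₁e₁ = e₁, e₂e₂ = e₁). A linear map P : ℂ² → ℂ² is a Rota–Baxter operator of weight 0 on E_2 if and only if there exists c ∈ ℂ such that P has matrix ((0,0),(c, i·c)) or matrix ((0,0),(c, −i·c)), i.e. P(e₁) = 0 and P(e₂) = c e₁ ± i c e₂. -/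
/-!
The product of `E₂` is `x · y = (x ⬝ᵥ y) e₁`, so with weight `0` the Rota–Baxter identity reads
`(P x ⬝ᵥ P y) e₁ = (x ⬝ᵥ P y + P x ⬝ᵥ y) P e₁`. At `x = y = e₁` it says
`(P e₁ ⬝ᵥ P e₁) e₁ = 2 (P e₁)₁ P e₁`, which forces `P e₁ = 0`; then `P x = x₂ P e₂`, and the
identity holds exactly when `P e₂` is isotropic, i.e. `P e₂ = (c, ±i c)`.
-/

open Complex

local notation "E₂" => !![(1 : ℂ), 0; 1, 0]

lemma evMulC_E₂ (x y : Fin 2 → ℂ) : evMulC E₂ x y = (x ⬝ᵥ y) • ![1, 0] := by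
  ext k
  fin_cases k <;> simp [evMulC, dotProduct, Fin.sum_univ_two]

lemma isRotaBaxter_E₂_zero_iff (P : (Fin 2 → ℂ) →ₗ[ℂ] (Fin 2 → ℂ)) :
    IsRotaBaxter E₂ 0 P ↔
      ∀ x y, (P x ⬝ᵥ P y) • ![1, 0] = (x ⬝ᵥ P y + P x ⬝ᵥ y) • P ![1, 0] := by
  simp only [IsRotaBaxter, evMulC_E₂, zero_smul, add_zero, ← add_smul, map_smul]

lemma eq_zero_of_dotProduct_self_smul_eq {u : Fin 2 → ℂ}
    (h : (u ⬝ᵥ u) • ![1, 0] = (2 * u 0) • u) : u = 0 := by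
  have h0 := congrFun h 0
  have h1 := congrFun h 1
  simp only [dotProduct, Fin.sum_univ_two, Pi.smul_apply, smul_eq_mul, Matrix.cons_val_zero,
    Matrix.cons_val_one, mul_one, mul_zero] at h0 h1
  have hu0 : u 0 = 0 := by
    have : u 0 ^ 3 = 0 := by linear_combination (-u 0) * h0 - u 1 / 2 * h1
    exact (pow_eq_zero_iff three_ne_zero).mp this
  have hu1 : u 1 = 0 := by
    have : u 1 ^ 2 = 0 := by rw [hu0] at h0; linear_combination h0
    exact (pow_eq_zero_iff two_ne_zero).mp this
  ext i
  fin_cases i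
  exacts [hu0, hu1]

lemma dotProduct_self_eq_zero_iff_exists (v : Fin 2 → ℂ) :
    v ⬝ᵥ v = 0 ↔ ∃ c : ℂ, v = ![c, I * c] ∨ v = ![c, -I * c] := by
  have hv : v = ![v 0, v 1] := by ext i; fin_cases i <;> rfl
  have hfactor : v ⬝ᵥ v = (v 1 - I * v 0) * (v 1 + I * v 0) := by
    simp only [dotProduct, Fin.sum_univ_two]
    linear_combination (v 0 * v 0) * I_sq
  constructor
  · intro h
    rw [hfactor] at h
    refine ⟨v 0, ?_⟩
    rcases mul_eq_zero.mp h with h | h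
    · left; rw [hv, sub_eq_zero.mp h]; rfl
    · right; rw [hv, eq_neg_of_add_eq_zero_left h, neg_mul]; rfl
  · rintro ⟨c, rfl | rfl⟩ <;>
    simp only [dotProduct, Fin.sum_univ_two, Matrix.cons_val_zero, Matrix.cons_val_one] <;>
    linear_combination (c * c) * I_sq

lemma LinearMap.apply_eq_smul_of_map_e₁_eq_zero (P : (Fin 2 → ℂ) →ₗ[ℂ] (Fin 2 → ℂ))
    (h : P ![1, 0] = 0) (x : Fin 2 → ℂ) : P x = x 1 • P ![0, 1] := by
  have hx : x = x 0 • ![1, 0] + x 1 • ![0, 1] := by ext i; fin_cases i <;> simp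
  rw [hx, map_add, map_smul, map_smul, h]
  simp

/-- Rota–Baxter operators of weight 0 on `E₂` (`e₁e₁ = e₁, e₂e₂ = e₁`) are
exactly those with matrix `((0,0),(c, ±ic))`. -/
theorem rb_weight0_E2 (P : (Fin 2 → ℂ) →ₗ[ℂ] (Fin 2 → ℂ)) :
    IsRotaBaxter !![1, 0; 1, 0] 0 P ↔
      ∃ c : ℂ, P ![1, 0] = ![0, 0] ∧
        (P ![0, 1] = ![c, Complex.I * c] ∨ P ![0, 1] = ![c, -Complex.I * c]) := by
  have hzero : (![0, 0] : Fin 2 → ℂ) = 0 := by ext i; fin_cases i <;> rfl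
  rw [isRotaBaxter_E₂_zero_iff, hzero]
  constructor
  · intro h
    have he₁ : P ![1, 0] = 0 := eq_zero_of_dotProduct_self_smul_eq <| by
      simpa [dotProduct, Fin.sum_univ_two, two_mul] using h ![1, 0] ![1, 0]
    have he₂ : P ![0, 1] ⬝ᵥ P ![0, 1] = 0 := by
      simpa [he₁] using h ![0, 1] ![0, 1]
    obtain ⟨c, hc⟩ := (dotProduct_self_eq_zero_iff_exists _).mp he₂
    exact ⟨c, he₁, hc⟩
  · rintro ⟨c, he₁, he₂⟩ x y
    have hiso := (dotProduct_self_eq_zero_iff_exists (P ![0, 1])).mpr ⟨c, he₂⟩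
    rw [P.apply_eq_smul_of_map_e₁_eq_zero he₁ x, P.apply_eq_smul_of_map_e₁_eq_zero he₁ y, he₁,
      smul_dotProduct, dotProduct_smul, hiso]
    simp
end
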